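/- arXiv:1712.08152 — 5 statements merged into one kernel-verified Lean document; each statement's English description precedes it below -/
import Mathlib

section
/- Let T ∈ (0, ∞), N ∈ ℕ, h = T/N, p ∈ [2, ∞) and σ ∈ (0, 1). For θ ∈ [0, 1] define the shifted grid points θ_j = (j − 1 + θ)h for j ∈ {1, …, N} and θ_{N+1} = T. Then for every Borel measurable function φ : [0, T] × [0, T] → [0, ∞] one has ∫₀¹ Σ_{j=1}^N ∫_{θ_j}^{θ_{j+1}} φ(t, θ_j) dt dθ ≤ h^{pσ} ∫₀^T ∫₀^T φ(t, s) / |t − s|^{1 + pσ} ds dt. -/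
/-!
Each cell `(θ_j, θ_{j+1}]` of the shifted grid lies in the window `(0, T] ∩ (θ_j, θ_j + h]`, so
the sum is at most `∑ⱼ G(θ_j)` with `G(s) = ∫_{(0,T] ∩ (s, s+h]} φ(t, s) dt`. As `θ` runs
uniformly over `[0, 1]`, `θ_j` runs uniformly over `[(j-1)h, jh]`, and these cells tile `(0, T]`;
hence the `θ`-average of `∑ⱼ G(θ_j)` is `h⁻¹ ∫₀ᵀ G`. Finally `h⁻¹ ≤ h^{pσ} / |t - s|^{1+pσ}`
on the window `0 < t - s ≤ h`, and Tonelli exchanges the order of integration.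
-/

open MeasureTheory Finset ENNReal

theorem ofReal_mul_setLIntegral_Icc_comp_shift_mul {h : ℝ} (hh : 0 < h) (c : ℝ)
    (g : ℝ → ℝ≥0∞) :
    ENNReal.ofReal h * ∫⁻ θ in Set.Icc 0 1, g ((c + θ) * h) =
      ∫⁻ s in Set.Icc (c * h) ((c + 1) * h), g s := by
  have hf : ∀ θ ∈ Set.Icc (0 : ℝ) 1,
      HasDerivWithinAt (fun θ => h * θ + c * h) h (Set.Icc 0 1) θ := fun θ _ =>
    (((hasDerivAt_id θ).const_mul h).add_const _).hasDerivWithinAt.congr_deriv (mul_one h)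
  have hsubst := lintegral_image_eq_lintegral_abs_deriv_mul measurableSet_Icc hf
    (fun x _ y _ hxy => by simpa [hh.ne'] using hxy) g
  rw [Set.image_affine_Icc' hh, lintegral_const_mul' _ _ ofReal_ne_top, abs_of_pos hh] at hsubst
  simp_rw [show ∀ θ, (c + θ) * h = h * θ + c * h from fun θ => by ring, ← hsubst]
  congr 2
  simp only [mul_zero, zero_add]

theorem sum_setLIntegral_Ioc_grid {h : ℝ} (hh : 0 ≤ h) (g : ℝ → ℝ≥0∞) (N : ℕ) :
    ∑ j ∈ Icc 1 N, ∫⁻ s in Set.Ioc (((j : ℝ) - 1) * h) (j * h), g s =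
      ∫⁻ s in Set.Ioc 0 (N * h), g s := by
  induction N with
  | zero => simp
  | succ N ih =>
    rw [sum_Icc_succ_top (by omega), ih, Nat.cast_succ, add_sub_cancel_right,
      ← lintegral_union measurableSet_Ioc (Set.Ioc_disjoint_Ioc_of_le le_rfl),
      Set.Ioc_union_Ioc_eq_Ioc (by positivity) (by nlinarith)]

theorem setLIntegral_Icc_sum_comp_grid_shift {h : ℝ} (hh : 0 < h) {g : ℝ → ℝ≥0∞}
    (hg : Measurable g) (N : ℕ) :
    ∫⁻ θ in Set.Icc 0 1, ∑ j ∈ Icc 1 N, g (((j : ℝ) - 1 + θ) * h) =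
      ENNReal.ofReal h⁻¹ * ∫⁻ s in Set.Ioc 0 (N * h), g s := by
  rw [lintegral_finsetSum _ fun j _ => by fun_prop, ← sum_setLIntegral_Ioc_grid hh.le, mul_sum]
  refine sum_congr rfl fun j _ => ?_
  have hsubst := ofReal_mul_setLIntegral_Icc_comp_shift_mul hh ((j : ℝ) - 1) g
  rw [sub_add_cancel] at hsubst
  rw [restrict_Ioc_eq_restrict_Icc, ← hsubst, ← mul_assoc, ← ofReal_mul (by positivity),
    inv_mul_cancel₀ hh.ne', ofReal_one, one_mul]

theorem shifted_cell_subset_window {T h θ : ℝ} {N j : ℕ} (hh : 0 ≤ h) (hTN : N * h = T)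
    (hθ : θ ∈ Set.Icc 0 1) (hj : j ∈ Icc 1 N) :
    Set.Ioc (((j : ℝ) - 1 + θ) * h) (if j = N then T else ((j : ℝ) + θ) * h) ⊆
      Set.Ioc 0 T ∩ Set.Ioc (((j : ℝ) - 1 + θ) * h) (((j : ℝ) - 1 + θ) * h + h) := by
  obtain ⟨hθ0, hθ1⟩ := hθ
  obtain ⟨hj1, hjN⟩ := mem_Icc.1 hj
  have hj1' : (1 : ℝ) ≤ j := by exact_mod_cast hj1
  have hleft : 0 ≤ ((j : ℝ) - 1 + θ) * h := mul_nonneg (by linarith) hh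
  have hright : (if j = N then T else ((j : ℝ) + θ) * h) ≤ T ∧
      (if j = N then T else ((j : ℝ) + θ) * h) ≤ ((j : ℝ) - 1 + θ) * h + h := by
    split_ifs with hjN'
    · subst hjN'
      exact ⟨le_rfl, by nlinarith⟩
    · have : (j : ℝ) + 1 ≤ N := by exact_mod_cast lt_of_le_of_ne hjN hjN'
      exact ⟨by nlinarith, by linarith⟩
  rintro t ⟨hst, htb⟩
  exact ⟨⟨hleft.trans_lt hst, htb.trans hright.1⟩, hst, htb.trans hright.2⟩

theorem measurable_setLIntegral_inter_Ioc {φ : ℝ → ℝ → ℝ≥0∞}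
    (hφ : Measurable (Function.uncurry φ)) {A : Set ℝ} (hA : MeasurableSet A) (h : ℝ) :
    Measurable fun s => ∫⁻ t in A ∩ Set.Ioc s (s + h), φ t s := by
  have hset : MeasurableSet {q : ℝ × ℝ | q.2 ∈ A ∩ Set.Ioc q.1 (q.1 + h)} :=
    (measurable_snd hA).inter ((measurableSet_lt measurable_fst measurable_snd).inter
      (measurableSet_le measurable_snd (measurable_fst.add_const h)))
  convert ((hφ.comp measurable_swap).indicator hset).lintegral_prod_right' (ν := volume)
    using 2 with s
  rw [← lintegral_indicator (hA.inter measurableSet_Ioc)]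
  rfl

theorem ofReal_inv_le_rpow_div_abs_sub_rpow {h r s t : ℝ} (hr : 0 ≤ r)
    (hst : t ∈ Set.Ioc s (s + h)) :
    ENNReal.ofReal h⁻¹ ≤ ENNReal.ofReal (h ^ r) / ENNReal.ofReal (|t - s| ^ (1 + r)) := by
  obtain ⟨hst, hth⟩ := hst
  have hts : 0 < t - s := sub_pos.2 hst
  have hh : 0 < h := by linarith
  rw [← ofReal_div_of_pos (by positivity), abs_of_pos hts]
  refine ofReal_le_ofReal ?_
  calc h⁻¹ = h ^ r / h ^ (1 + r) := by
        rw [Real.rpow_add hh, Real.rpow_one, div_mul_cancel_right₀ (by positivity)]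
    _ ≤ h ^ r / (t - s) ^ (1 + r) := by
        gcongr
        linarith

theorem ofReal_inv_mul_lintegral_window_le_slobodeckij {h r : ℝ} (hr : 0 ≤ r)
    {φ : ℝ → ℝ → ℝ≥0∞} (hφ : Measurable (Function.uncurry φ)) {A : Set ℝ}
    (hA : MeasurableSet A) :
    ENNReal.ofReal h⁻¹ * ∫⁻ s in A, ∫⁻ t in A ∩ Set.Ioc s (s + h), φ t s ≤
      ENNReal.ofReal (h ^ r) *
        ∫⁻ t in A, ∫⁻ s in A, φ t s / ENNReal.ofReal (|t - s| ^ (1 + r)) := by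
  have hpointwise : ∀ s t, ENNReal.ofReal h⁻¹ * (Set.Ioc s (s + h)).indicator (φ · s) t ≤
      ENNReal.ofReal (h ^ r) * (φ t s / ENNReal.ofReal (|t - s| ^ (1 + r))) := by
    intro s t
    by_cases hst : t ∈ Set.Ioc s (s + h)
    · rw [Set.indicator_of_mem hst, mul_div_assoc', div_eq_mul_inv, mul_right_comm,
        ← div_eq_mul_inv]
      gcongr
      exact ofReal_inv_le_rpow_div_abs_sub_rpow hr hst
    · rw [Set.indicator_of_notMem hst, mul_zero]
      exact zero_le
  have hkernel : Measurable fun q : ℝ × ℝ =>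
      φ q.2 q.1 / ENNReal.ofReal (|q.2 - q.1| ^ (1 + r)) :=
    (hφ.comp measurable_swap).div (by fun_prop)
  calc ENNReal.ofReal h⁻¹ * ∫⁻ s in A, ∫⁻ t in A ∩ Set.Ioc s (s + h), φ t s
      = ∫⁻ s in A, ∫⁻ t in A,
          ENNReal.ofReal h⁻¹ * (Set.Ioc s (s + h)).indicator (φ · s) t := by
        rw [← lintegral_const_mul' _ _ ofReal_ne_top]
        refine setLIntegral_congr_fun hA fun s _ => ?_
        rw [lintegral_const_mul' _ _ ofReal_ne_top, lintegral_indicator measurableSet_Ioc,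
          Measure.restrict_restrict measurableSet_Ioc, Set.inter_comm]
    _ ≤ ∫⁻ s in A, ∫⁻ t in A, ENNReal.ofReal (h ^ r) *
          (φ t s / ENNReal.ofReal (|t - s| ^ (1 + r))) :=
        lintegral_mono fun s => lintegral_mono fun t => hpointwise s t
    _ = ENNReal.ofReal (h ^ r) *
          ∫⁻ s in A, ∫⁻ t in A, φ t s / ENNReal.ofReal (|t - s| ^ (1 + r)) := by
        simp_rw [lintegral_const_mul' _ _ ofReal_ne_top]
    _ = _ := by
        rw [lintegral_lintegral_swap hkernel.aemeasurable]

/-- Key randomization estimate: averaging the shift parameter `θ` uniformly over `[0,1]`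
converts local increments on the randomly shifted grid `θ_j = (j - 1 + θ)h`, `θ_{N+1} = T`,
into the Sobolev–Slobodeckij double integral:
`∫₀¹ ∑_{j=1}^N ∫_{θ_j}^{θ_{j+1}} φ(t, θ_j) dt dθ ≤ h^{pσ} ∫₀^T ∫₀^T φ(t,s)/|t-s|^{1+pσ} ds dt`. -/
theorem randomized_shift_estimate (T : ℝ) (hT : 0 < T) (N : ℕ) (hN : 1 ≤ N)
    (h : ℝ) (hh : h = T / N) (p σ : ℝ) (hp : 2 ≤ p) (hσ : σ ∈ Set.Ioo (0 : ℝ) 1)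
    (φ : ℝ → ℝ → ℝ≥0∞) (hφ : Measurable (Function.uncurry φ)) :
    (∫⁻ θ in Set.Icc (0 : ℝ) 1,
        ∑ j ∈ Finset.Icc 1 N,
          ∫⁻ t in Set.Ioc (((j : ℝ) - 1 + θ) * h)
              (if j = N then T else ((j : ℝ) + θ) * h),
            φ t (((j : ℝ) - 1 + θ) * h)) ≤
      ENNReal.ofReal (h ^ (p * σ)) *
        ∫⁻ t in Set.Ioc (0 : ℝ) T, ∫⁻ s in Set.Ioc (0 : ℝ) T,
          φ t s / ENNReal.ofReal (|t - s| ^ (1 + p * σ)) := by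
  have hh0 : 0 < h := hh ▸ div_pos hT (by exact_mod_cast hN)
  have hTN : N * h = T := by rw [hh]; field_simp
  have hpσ : 0 ≤ p * σ := mul_nonneg (by linarith) hσ.1.le
  calc _ ≤ ∫⁻ θ in Set.Icc (0 : ℝ) 1, ∑ j ∈ Icc 1 N,
          ∫⁻ t in Set.Ioc 0 T ∩ Set.Ioc (((j : ℝ) - 1 + θ) * h) (((j : ℝ) - 1 + θ) * h + h),
            φ t (((j : ℝ) - 1 + θ) * h) :=
        setLIntegral_mono' measurableSet_Icc fun θ hθ => sum_le_sum fun j hj =>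
          lintegral_mono_set (shifted_cell_subset_window hh0.le hTN hθ hj)
    _ = ENNReal.ofReal h⁻¹ *
          ∫⁻ s in Set.Ioc 0 T, ∫⁻ t in Set.Ioc 0 T ∩ Set.Ioc s (s + h), φ t s := by
        rw [setLIntegral_Icc_sum_comp_grid_shift hh0
          (measurable_setLIntegral_inter_Ioc hφ measurableSet_Ioc h), hTN]
    _ ≤ _ := ofReal_inv_mul_lintegral_window_le_slobodeckij hpσ hφ measurableSet_Ioc
end

section
/- Let p ∈ [2, ∞), σ ∈ (0, 1), let [a, b] ⊂ ℝ be an interval of length h = b − a > 0, set m = (a + b)/2, and let f ∈ L^p(a, b). Then ∫_a^b | ∫_a^b ∫_m^t (f(s) − f(r)) ds dr |^p dt ≤ h^{2p + pσ} ∫_a^b ∫_a^b |f(s) − f(r)|^p / |s − r|^{pσ + 1} ds dr. -/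
/-!
For `t ∈ (a, b]` the inner double integral is bounded by `E = ∫_a^b ∫_a^b |f(s) - f(r)| ds dr`,
so the left side is at most `h E^p`. Jensen's inequality on the square `(a, b]²` of area `h²`
gives `E^p ≤ h^{2(p-1)} ∫∫ |f(s) - f(r)|^p`, and `|s - r| ≤ h` inserts the singular weight at the
cost of `h^{pσ+1}`; the powers of `h` add up to `2p + pσ`.
-/

open MeasureTheory intervalIntegral Set
open scoped ENNReal Interval

theorem rpow_lintegral_le_measure_univ_rpow_mul {α : Type*} [MeasurableSpace α] {μ : Measure α}
    {p : ℝ} (hp : 1 ≤ p) {F : α → ℝ≥0∞} (hF : AEMeasurable F μ) :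
    (∫⁻ x, F x ∂μ) ^ p ≤ μ univ ^ (p - 1) * ∫⁻ x, F x ^ p ∂μ := by
  have hp0 : 0 < p := by linarith
  have holder := eLpNorm'_le_eLpNorm'_mul_rpow_measure_univ one_pos hp hF.aestronglyMeasurable
  simp only [eLpNorm'_eq_lintegral_enorm, enorm_eq_self, ENNReal.rpow_one, div_one] at holder
  calc (∫⁻ x, F x ∂μ) ^ p
      ≤ ((∫⁻ x, F x ^ p ∂μ) ^ (1 / p) * μ univ ^ (1 - 1 / p)) ^ p := by gcongr
    _ = μ univ ^ (p - 1) * ∫⁻ x, F x ^ p ∂μ := by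
      rw [ENNReal.mul_rpow_of_nonneg _ _ hp0.le, ← ENNReal.rpow_mul, ← ENNReal.rpow_mul,
        one_div_mul_cancel hp0.ne', ENNReal.rpow_one, mul_comm, sub_mul, one_div_mul_cancel hp0.ne',
        one_mul]

theorem rpow_lintegral_lintegral_le {α β : Type*} [MeasurableSpace α] [MeasurableSpace β]
    {μ : Measure α} {ν : Measure β} [SFinite ν] {p : ℝ} (hp : 1 ≤ p) {F : α → β → ℝ≥0∞}
    (hF : AEMeasurable (Function.uncurry F) (μ.prod ν)) :
    (∫⁻ x, ∫⁻ y, F x y ∂ν ∂μ) ^ p ≤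
      (μ univ * ν univ) ^ (p - 1) * ∫⁻ x, ∫⁻ y, F x y ^ p ∂ν ∂μ := by
  have := rpow_lintegral_le_measure_univ_rpow_mul hp hF
  rwa [← univ_prod_univ, Measure.prod_prod, lintegral_prod _ hF,
    lintegral_prod _ (hF.pow_const p)] at this

section

variable {E : Type*} [NormedAddCommGroup E] [NormedSpace ℝ E]

theorem enorm_intervalIntegral_le_setLIntegral_Ioc {a b m t : ℝ} (hm : m ∈ Icc a b)
    (ht : t ∈ Icc a b) (g : ℝ → E) : ‖∫ s in m..t, g s‖ₑ ≤ ∫⁻ s in Ioc a b, ‖g s‖ₑ :=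
  calc ‖∫ s in m..t, g s‖ₑ = ‖∫ s in Ι m t, g s‖ₑ := by
        simp only [← ofReal_norm, norm_integral_eq_norm_integral_uIoc]
    _ ≤ ∫⁻ s in Ι m t, ‖g s‖ₑ := enorm_integral_le_lintegral_enorm _
    _ ≤ ∫⁻ s in Ioc a b, ‖g s‖ₑ :=
        lintegral_mono_set (Ioc_subset_Ioc (le_min hm.1 ht.1) (max_le hm.2 ht.2))

theorem enorm_intervalIntegral_intervalIntegral_le {a b m t : ℝ} (hm : m ∈ Icc a b)
    (ht : t ∈ Icc a b) (F : ℝ → ℝ → E) :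
    ‖∫ r in a..b, ∫ s in m..t, F r s‖ₑ ≤ ∫⁻ r in Ioc a b, ∫⁻ s in Ioc a b, ‖F r s‖ₑ := by
  have hab : a ≤ b := hm.1.trans hm.2
  refine (enorm_intervalIntegral_le_setLIntegral_Ioc (left_mem_Icc.2 hab) (right_mem_Icc.2 hab)
    _).trans ?_
  exact lintegral_mono fun r => enorm_intervalIntegral_le_setLIntegral_Ioc hm ht _

end

theorem setLIntegral_ofReal_abs_rpow_le {a b m p : ℝ} (hm : m ∈ Icc a b) (hp : 0 ≤ p)
    (F : ℝ → ℝ → ℝ) :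
    ∫⁻ t in Ioc a b, ENNReal.ofReal (|∫ r in a..b, ∫ s in m..t, F r s| ^ p) ≤
      ENNReal.ofReal (b - a) * (∫⁻ r in Ioc a b, ∫⁻ s in Ioc a b, ‖F r s‖ₑ) ^ p := by
  rw [← Real.volume_Ioc, mul_comm, ← setLIntegral_const]
  refine setLIntegral_mono' measurableSet_Ioc fun t ht => ?_
  rw [← Real.norm_eq_abs, ← ENNReal.ofReal_rpow_of_nonneg (norm_nonneg _) hp, ofReal_norm]
  gcongr
  exact enorm_intervalIntegral_intervalIntegral_le hm (Ioc_subset_Icc_self ht) _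

theorem le_rpow_mul_div_rpow {x d h e : ℝ} (hx : 0 ≤ x) (hd : 0 ≤ d) (hdh : d ≤ h) (he : 0 ≤ e)
    (hx0 : d = 0 → x = 0) : x ≤ h ^ e * (x / d ^ e) := by
  rcases hd.eq_or_lt with rfl | hd
  · simp [hx0 rfl]
  calc x = d ^ e * (x / d ^ e) := by field_simp
    _ ≤ h ^ e * (x / d ^ e) := by gcongr

theorem setLIntegral_setLIntegral_enorm_sub_rpow_le {a b p e : ℝ} (hp : 0 < p) (he : 0 ≤ e)
    (g : ℝ → ℝ) :
    ∫⁻ r in Ioc a b, ∫⁻ s in Ioc a b, ‖g s - g r‖ₑ ^ p ≤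
      ENNReal.ofReal ((b - a) ^ e) *
        ∫⁻ r in Ioc a b, ∫⁻ s in Ioc a b, ENNReal.ofReal (|g s - g r| ^ p / |s - r| ^ e) := by
  have pointwise : ∀ r ∈ Ioc a b, ∀ s ∈ Ioc a b, ‖g s - g r‖ₑ ^ p ≤
      ENNReal.ofReal ((b - a) ^ e) * ENNReal.ofReal (|g s - g r| ^ p / |s - r| ^ e) := by
    intro r hr s hs
    rw [Real.enorm_eq_ofReal_abs, ENNReal.ofReal_rpow_of_nonneg (abs_nonneg _) hp.le,
      ← ENNReal.ofReal_mul (Real.rpow_nonneg (by linarith [hr.1, hr.2]) e)]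
    refine ENNReal.ofReal_le_ofReal (le_rpow_mul_div_rpow (by positivity) (abs_nonneg _) ?_ he ?_)
    · exact abs_sub_le_iff.2 ⟨by linarith [hs.2, hr.1], by linarith [hr.2, hs.1]⟩
    · intro hsr
      obtain rfl : s = r := sub_eq_zero.1 (abs_eq_zero.1 hsr)
      simp [Real.zero_rpow hp.ne']
  simp_rw [← lintegral_const_mul' _ _ ENNReal.ofReal_ne_top]
  exact setLIntegral_mono' measurableSet_Ioc fun r hr =>
    setLIntegral_mono' measurableSet_Ioc (pointwise r hr)

/-- Core deterministic estimate in the proof that the generalized stochastic trapezoidal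
rule converges with order `1 + σ`: for `f ∈ L^p(a,b)`, `h = b - a`, `m = (a+b)/2`,
`∫_a^b |∫_a^b ∫_m^t (f(s)-f(r)) ds dr|^p dt
  ≤ h^{2p+pσ} ∫_a^b ∫_a^b |f(s)-f(r)|^p / |s-r|^{pσ+1} ds dr`. -/
theorem trapezoidal_core_estimate (p σ : ℝ) (hp : 2 ≤ p) (hσ : σ ∈ Set.Ioo (0 : ℝ) 1)
    (a b : ℝ) (hab : a < b) (f : ℝ → ℝ)
    (hf : MemLp f (ENNReal.ofReal p) (volume.restrict (Set.Ioc a b))) :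
    (∫⁻ t in Set.Ioc a b,
        ENNReal.ofReal
          (|∫ r in a..b, ∫ s in ((a + b) / 2)..t, (f s - f r)| ^ p)) ≤
      ENNReal.ofReal ((b - a) ^ (2 * p + p * σ)) *
        ∫⁻ r in Set.Ioc a b, ∫⁻ s in Set.Ioc a b,
          ENNReal.ofReal (|f s - f r| ^ p / |s - r| ^ (p * σ + 1)) := by
  have hh : 0 < b - a := sub_pos.2 hab
  have hF : AEMeasurable (Function.uncurry fun r s => ‖f s - f r‖ₑ)
      ((volume.restrict (Ioc a b)).prod (volume.restrict (Ioc a b))) :=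
    (hf.1.aemeasurable.comp_snd.sub hf.1.aemeasurable.comp_fst).enorm
  have powers : ENNReal.ofReal (b - a) * (ENNReal.ofReal (b - a) * ENNReal.ofReal (b - a)) ^ (p - 1)
      * ENNReal.ofReal ((b - a) ^ (p * σ + 1)) = ENNReal.ofReal ((b - a) ^ (2 * p + p * σ)) := by
    rw [← ENNReal.ofReal_mul hh.le, ENNReal.ofReal_rpow_of_pos (by positivity),
      ← ENNReal.ofReal_mul hh.le, ← ENNReal.ofReal_mul (by positivity), Real.mul_rpow hh.le hh.le]
    congr 1
    conv_rhs => rw [show 2 * p + p * σ = (p - 1) + (p - 1) + (p * σ + 1) + 1 by ring,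
      Real.rpow_add_one hh.ne', Real.rpow_add hh, Real.rpow_add hh]
    ring
  calc _ ≤ ENNReal.ofReal (b - a) * (∫⁻ r in Ioc a b, ∫⁻ s in Ioc a b, ‖f s - f r‖ₑ) ^ p :=
        setLIntegral_ofReal_abs_rpow_le ⟨by linarith, by linarith⟩ (by linarith) _
    _ ≤ ENNReal.ofReal (b - a) * ((ENNReal.ofReal (b - a) * ENNReal.ofReal (b - a)) ^ (p - 1) *
          ∫⁻ r in Ioc a b, ∫⁻ s in Ioc a b, ‖f s - f r‖ₑ ^ p) := by
        gcongr
        simpa only [Measure.restrict_apply_univ, Real.volume_Ioc] using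
          rpow_lintegral_lintegral_le (by linarith) hF
    _ ≤ ENNReal.ofReal (b - a) * ((ENNReal.ofReal (b - a) * ENNReal.ofReal (b - a)) ^ (p - 1) *
          (ENNReal.ofReal ((b - a) ^ (p * σ + 1)) * ∫⁻ r in Ioc a b, ∫⁻ s in Ioc a b,
            ENNReal.ofReal (|f s - f r| ^ p / |s - r| ^ (p * σ + 1)))) := by
        gcongr
        exact setLIntegral_setLIntegral_enorm_sub_rpow_le (by linarith) (by nlinarith [hσ.1]) f
    _ = _ := by rw [← powers]; ring
end

section
/- Let T ∈ (0, ∞), σ ∈ (0, 1) and p ∈ [1, ∞) with σp < 1, let n ∈ ℕ and c_1, …, c_n ∈ [0, T], and define f : [0, T] → ℝ by f(t) = Σ_{k=1}^n I_{c_k}(t), where I_c(t) = 1 if t ≥ c and I_c(t) = 0 if t < c. Then ∫₀^T ∫₀^T |f(t) − f(s)|^p / |t − s|^{1 + σp} dt ds ≤ n^p · (2 / (σp(1 − σp))) T^{1 − σp}. -/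
/-!
Write `a = σp` and `f = ∑ₖ I_{c_k}`. Since `|f t - f s| ≤ n` and `p ≥ 1`,
`|f t - f s|^p ≤ n^(p-1) |f t - f s| ≤ n^(p-1) ∑ₖ |I_{c_k} t - I_{c_k} s|`, which reduces
the bound to the case `p = 1` of a single jump, at the price `n^(p-1) · n = n^p`. For a jump
at `c`, the integrand in `t` lives on the side of `c` opposite to `s`, so the inner integral is
at most `∫_{|s-c|}^∞ u^(-1-a) du = |s-c|^(-a)/a`; integrating this singularity over `(0,T]` on
both sides of `c` gives at most `2 T^(1-a) / (a(1-a))`.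
-/

open MeasureTheory Finset

/-- The indicator function `I_c(t) = 1` for `t ≥ c` and `0` for `t < c`. -/
noncomputable def jumpInd (c t : ℝ) : ℝ := if c ≤ t then 1 else 0

/-- The Sobolev–Slobodeckij double integral on `(0,T)`. -/
noncomputable def slobodeckijSeminorm (T σ p : ℝ) (v : ℝ → ℝ) : ENNReal :=
  ∫⁻ s in Set.Ioc (0 : ℝ) T, ∫⁻ t in Set.Ioc (0 : ℝ) T,
    ENNReal.ofReal (|v t - v s| ^ p / |t - s| ^ (1 + σ * p))

open Set
open scoped ENNReal

theorem lintegral_Ioi_rpow_of_lt {r d : ℝ} (hr : r < -1) (hd : 0 < d) :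
    ∫⁻ u in Ioi d, ENNReal.ofReal (u ^ r) = ENNReal.ofReal (-d ^ (r + 1) / (r + 1)) := by
  rw [← integral_Ioi_rpow_of_lt hr hd,
    ofReal_integral_eq_lintegral_ofReal (integrableOn_Ioi_rpow_of_lt hr hd)]
  filter_upwards [ae_restrict_mem measurableSet_Ioi] with u hu using
    Real.rpow_nonneg (hd.trans hu).le r

theorem lintegral_Ioc_zero_rpow {r d : ℝ} (hr : -1 < r) (hd : 0 ≤ d) :
    ∫⁻ u in Ioc 0 d, ENNReal.ofReal (u ^ r) = ENNReal.ofReal (d ^ (r + 1) / (r + 1)) := by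
  have hint : IntegrableOn (· ^ r) (Ioc 0 d) := (intervalIntegral.intervalIntegrable_rpow' hr).1
  rw [← ofReal_integral_eq_lintegral_ofReal hint, ← intervalIntegral.integral_of_le hd,
    integral_rpow (Or.inl hr), Real.zero_rpow (by linarith), sub_zero]
  filter_upwards [ae_restrict_mem measurableSet_Ioc] with u hu using
    Real.rpow_nonneg hu.1.le r

theorem lintegral_indicator_Ici_rpow {a d : ℝ} (ha : 0 < a) (hd : 0 < d) :
    ∫⁻ u, (Ici d).indicator (fun u => ENNReal.ofReal (u ^ (-(1 + a)))) u =
      ENNReal.ofReal (d ^ (-a) / a) := by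
  rw [lintegral_indicator measurableSet_Ici, setLIntegral_congr Ioi_ae_eq_Ici.symm,
    lintegral_Ioi_rpow_of_lt (by linarith) hd, show -(1 + a) + 1 = -a by ring, div_neg, neg_div,
    neg_neg]

theorem abs_jumpInd_sub_le_one (c t s : ℝ) : |jumpInd c t - jumpInd c s| ≤ 1 := by
  unfold jumpInd; split_ifs <;> norm_num

theorem measurable_jumpInd (c : ℝ) : Measurable (jumpInd c) :=
  Measurable.ite measurableSet_Ici measurable_const measurable_const

theorem ofReal_jumpInd_sub_div_le_of_lt {a c s : ℝ} (hsc : s < c) (t : ℝ) :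
    ENNReal.ofReal (|jumpInd c t - jumpInd c s| / |t - s| ^ (1 + a)) ≤
      (Ici (c - s)).indicator (fun u => ENNReal.ofReal (u ^ (-(1 + a)))) (t - s) := by
  by_cases hct : c ≤ t
  · have hts : 0 < t - s := by linarith
    rw [indicator_of_mem (by simpa using hct), Real.rpow_neg hts.le, abs_of_pos hts]
    simp [jumpInd, hct, hsc.not_ge]
  · simp [jumpInd, hct, hsc.not_ge]

theorem ofReal_jumpInd_sub_div_le_of_gt {a c s : ℝ} (hcs : c < s) (t : ℝ) :
    ENNReal.ofReal (|jumpInd c t - jumpInd c s| / |t - s| ^ (1 + a)) ≤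
      (Ici (s - c)).indicator (fun u => ENNReal.ofReal (u ^ (-(1 + a)))) (s - t) := by
  by_cases hct : c ≤ t
  · simp [jumpInd, hct, hcs.le]
  · have hst : 0 < s - t := by linarith
    rw [indicator_of_mem (show s - t ∈ Ici (s - c) by simp; linarith), Real.rpow_neg hst.le,
      abs_sub_comm t s, abs_of_pos hst]
    simp [jumpInd, hct, hcs.le]

theorem lintegral_jumpInd_sub_div_le {a c s : ℝ} (ha : 0 < a) (hs : s ≠ c) :
    ∫⁻ t, ENNReal.ofReal (|jumpInd c t - jumpInd c s| / |t - s| ^ (1 + a)) ≤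
      ENNReal.ofReal (|s - c| ^ (-a) / a) := by
  rcases hs.lt_or_gt with hsc | hcs
  · calc _ ≤ ∫⁻ t,
            (Ici (c - s)).indicator (fun u => ENNReal.ofReal (u ^ (-(1 + a)))) (t - s) :=
          lintegral_mono (ofReal_jumpInd_sub_div_le_of_lt hsc)
      _ = ENNReal.ofReal (|s - c| ^ (-a) / a) := by
          rw [lintegral_sub_right_eq_self, lintegral_indicator_Ici_rpow ha (sub_pos.2 hsc),
            abs_sub_comm, abs_of_pos (sub_pos.2 hsc)]
  · calc _ ≤ ∫⁻ t,
            (Ici (s - c)).indicator (fun u => ENNReal.ofReal (u ^ (-(1 + a)))) (s - t) :=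
          lintegral_mono (ofReal_jumpInd_sub_div_le_of_gt hcs)
      _ = ENNReal.ofReal (|s - c| ^ (-a) / a) := by
          rw [lintegral_sub_left_eq_self, lintegral_indicator_Ici_rpow ha (sub_pos.2 hcs),
            abs_of_pos (sub_pos.2 hcs)]

theorem setLIntegral_Ioc_abs_sub_rpow_le {r c T : ℝ} (hr : -1 < r) (hc : c ∈ Icc 0 T) :
    ∫⁻ s in Ioc 0 T, ENNReal.ofReal (|s - c| ^ r) ≤
      2 * ENNReal.ofReal (T ^ (r + 1) / (r + 1)) := by
  set φ : ℝ → ℝ≥0∞ := fun u => ENNReal.ofReal (u ^ r)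
  have hφ : Measurable φ := by fun_prop
  have split : ∀ᵐ s ∂volume.restrict (Ioc 0 T), ENNReal.ofReal (|s - c| ^ r) ≤
      (Ioc 0 c).indicator φ (c - s) + (Ioc 0 (T - c)).indicator φ (s - c) := by
    filter_upwards [ae_restrict_mem measurableSet_Ioc, (volume.restrict _).ae_ne c]
      with s hs hsc
    rcases hsc.lt_or_gt with h | h
    · rw [indicator_of_mem (show c - s ∈ Ioc 0 c from ⟨by linarith, by linarith [hs.1]⟩),
        abs_sub_comm, abs_of_pos (sub_pos.2 h)]
      exact le_self_add
    · rw [indicator_of_mem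
          (show s - c ∈ Ioc 0 (T - c) from ⟨by linarith, by linarith [hs.2]⟩),
        abs_of_pos (sub_pos.2 h)]
      exact le_add_self
  calc _ ≤ ∫⁻ s in Ioc 0 T,
          ((Ioc 0 c).indicator φ (c - s) + (Ioc 0 (T - c)).indicator φ (s - c)) :=
        lintegral_mono_ae split
    _ ≤ ∫⁻ s, ((Ioc 0 c).indicator φ (c - s) + (Ioc 0 (T - c)).indicator φ (s - c)) :=
        setLIntegral_le_lintegral _ _
    _ = (∫⁻ u in Ioc 0 c, φ u) + ∫⁻ u in Ioc 0 (T - c), φ u := by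
        have hA : Measurable fun s => (Ioc 0 c).indicator φ (c - s) :=
          (hφ.indicator measurableSet_Ioc).comp (measurable_const.sub measurable_id)
        rw [lintegral_add_left hA,
          lintegral_sub_left_eq_self, lintegral_sub_right_eq_self,
          lintegral_indicator measurableSet_Ioc, lintegral_indicator measurableSet_Ioc]
    _ = ENNReal.ofReal (c ^ (r + 1) / (r + 1)) +
          ENNReal.ofReal ((T - c) ^ (r + 1) / (r + 1)) := by
        congr 1
        exacts [lintegral_Ioc_zero_rpow hr hc.1, lintegral_Ioc_zero_rpow hr (sub_nonneg.2 hc.2)]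
    _ ≤ 2 * ENNReal.ofReal (T ^ (r + 1) / (r + 1)) := by
        obtain ⟨hc0, hcT⟩ := hc
        rw [two_mul]
        gcongr <;> linarith

theorem slobodeckijSeminorm_jumpInd_le {a c T : ℝ} (ha0 : 0 < a) (ha1 : a < 1)
    (hc : c ∈ Icc 0 T) :
    slobodeckijSeminorm T a 1 (jumpInd c) ≤
      ENNReal.ofReal (2 / (a * (1 - a)) * T ^ (1 - a)) := by
  simp only [slobodeckijSeminorm, Real.rpow_one, mul_one]
  have inner : ∀ᵐ s ∂volume.restrict (Ioc 0 T),
      ∫⁻ t in Ioc 0 T, ENNReal.ofReal (|jumpInd c t - jumpInd c s| / |t - s| ^ (1 + a)) ≤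
        ENNReal.ofReal (|s - c| ^ (-a)) * ENNReal.ofReal a⁻¹ := by
    -- at `s = c` the inner integral is `∞`, while `|s - c| ^ (-a) = 0`
    filter_upwards [(volume.restrict _).ae_ne c] with s hs
    rw [← ENNReal.ofReal_mul (by positivity), ← div_eq_mul_inv]
    exact (setLIntegral_le_lintegral _ _).trans (lintegral_jumpInd_sub_div_le ha0 hs)
  calc _ ≤ ∫⁻ s in Ioc 0 T, ENNReal.ofReal (|s - c| ^ (-a)) * ENNReal.ofReal a⁻¹ :=
        lintegral_mono_ae inner
    _ = (∫⁻ s in Ioc 0 T, ENNReal.ofReal (|s - c| ^ (-a))) * ENNReal.ofReal a⁻¹ :=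
        lintegral_mul_const _ (by fun_prop)
    _ ≤ 2 * ENNReal.ofReal (T ^ (-a + 1) / (-a + 1)) * ENNReal.ofReal a⁻¹ := by
        gcongr
        exact setLIntegral_Ioc_abs_sub_rpow_le (by linarith) hc
    _ = ENNReal.ofReal (2 / (a * (1 - a)) * T ^ (1 - a)) := by
        have : 0 ≤ T ^ (-a + 1) / (-a + 1) :=
          div_nonneg (Real.rpow_nonneg (hc.1.trans hc.2) _) (by linarith)
        rw [← ENNReal.ofReal_ofNat 2, ← ENNReal.ofReal_mul zero_le_two,
          ← ENNReal.ofReal_mul (by positivity)]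
        congr 1
        field_simp
        ring_nf

theorem rpow_le_rpow_sub_one_mul {x M p : ℝ} (hx : 0 ≤ x) (hxM : x ≤ M) (hp : 1 ≤ p) :
    x ^ p ≤ M ^ (p - 1) * x := by
  calc x ^ p = x ^ (p - 1) * x := by
        rw [← Real.rpow_add_one' hx (by linarith), sub_add_cancel]
    _ ≤ M ^ (p - 1) * x := by gcongr

theorem abs_sum_sub_sum_rpow_le {ι : Type*} (S : Finset ι) {x y : ι → ℝ}
    (h : ∀ i ∈ S, |x i - y i| ≤ 1) {p : ℝ} (hp : 1 ≤ p) :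
    |∑ i ∈ S, x i - ∑ i ∈ S, y i| ^ p ≤
      (#S : ℝ) ^ (p - 1) * ∑ i ∈ S, |x i - y i| := by
  have hsum : |∑ i ∈ S, x i - ∑ i ∈ S, y i| ≤ ∑ i ∈ S, |x i - y i| := by
    rw [← sum_sub_distrib]
    exact abs_sum_le_sum_abs _ _
  have hcard : ∑ i ∈ S, |x i - y i| ≤ #S := by simpa using sum_le_sum h
  calc _ ≤ (#S : ℝ) ^ (p - 1) * |∑ i ∈ S, x i - ∑ i ∈ S, y i| :=
        rpow_le_rpow_sub_one_mul (abs_nonneg _) (hsum.trans hcard) hp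
    _ ≤ _ := by gcongr

theorem slobodeckijSeminorm_sum_le {ι : Type*} (S : Finset ι) (v : ι → ℝ → ℝ)
    (hv : ∀ i, Measurable (v i)) (hv1 : ∀ i t s, |v i t - v i s| ≤ 1) {T σ p : ℝ}
    (hp : 1 ≤ p) :
    slobodeckijSeminorm T σ p (fun t => ∑ i ∈ S, v i t) ≤
      ENNReal.ofReal ((#S : ℝ) ^ (p - 1)) *
        ∑ i ∈ S, slobodeckijSeminorm T (σ * p) 1 (v i) := by
  simp only [slobodeckijSeminorm, Real.rpow_one, mul_one]
  set C := ENNReal.ofReal ((#S : ℝ) ^ (p - 1))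
  have hG : ∀ i, Measurable fun q : ℝ × ℝ =>
      ENNReal.ofReal (|v i q.2 - v i q.1| / |q.2 - q.1| ^ (1 + σ * p)) := by
    intro i
    have := hv i
    fun_prop
  calc _ ≤ ∫⁻ s in Ioc 0 T, ∫⁻ t in Ioc 0 T,
          C * ∑ i ∈ S, ENNReal.ofReal (|v i t - v i s| / |t - s| ^ (1 + σ * p)) := by
        refine lintegral_mono fun s => lintegral_mono fun t => ?_
        rw [← ENNReal.ofReal_sum_of_nonneg fun i _ => by positivity,
          ← ENNReal.ofReal_mul (by positivity), ← sum_div, ← mul_div_assoc]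
        gcongr
        exact abs_sum_sub_sum_rpow_le S (fun i _ => hv1 i t s) hp
    _ = ∫⁻ s in Ioc 0 T, C * ∑ i ∈ S, ∫⁻ t in Ioc 0 T,
          ENNReal.ofReal (|v i t - v i s| / |t - s| ^ (1 + σ * p)) := by
        refine lintegral_congr fun s => ?_
        have hGs : ∀ i ∈ S, Measurable fun t =>
            ENNReal.ofReal (|v i t - v i s| / |t - s| ^ (1 + σ * p)) :=
          fun i _ => by have := hv i; fun_prop
        rw [lintegral_const_mul' _ _ ENNReal.ofReal_ne_top, lintegral_finsetSum _ hGs]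
    _ = _ := by
        rw [lintegral_const_mul' _ _ ENNReal.ofReal_ne_top,
          lintegral_finsetSum _ fun i _ => (hG i).lintegral_prod_right']

theorem sum_jump_indicators_sobolev_general (T σ p : ℝ)
    (hσ : σ ∈ Set.Ioo (0 : ℝ) 1) (hp : 1 ≤ p) (hσp : σ * p < 1)
    (n : ℕ) (c : Fin n → ℝ) (hc : ∀ k, c k ∈ Set.Icc (0 : ℝ) T) :
    slobodeckijSeminorm T σ p (fun t => ∑ k, jumpInd (c k) t) ≤
      ENNReal.ofReal ((n : ℝ) ^ p * (2 / (σ * p * (1 - σ * p)) * T ^ (1 - σ * p))) := by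
  set B := 2 / (σ * p * (1 - σ * p)) * T ^ (1 - σ * p)
  have hσp0 : 0 < σ * p := mul_pos hσ.1 (by linarith)
  calc slobodeckijSeminorm T σ p (fun t => ∑ k, jumpInd (c k) t)
      ≤ ENNReal.ofReal ((n : ℝ) ^ (p - 1)) *
          ∑ k, slobodeckijSeminorm T (σ * p) 1 (jumpInd (c k)) := by
        simpa using slobodeckijSeminorm_sum_le univ (fun k => jumpInd (c k))
          (fun k => measurable_jumpInd (c k)) (fun k => abs_jumpInd_sub_le_one (c k)) hp
    _ ≤ ENNReal.ofReal ((n : ℝ) ^ (p - 1)) * ∑ _k : Fin n, ENNReal.ofReal B := by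
        gcongr with k
        exact slobodeckijSeminorm_jumpInd_le hσp0 hσp (hc k)
    _ = ENNReal.ofReal ((n : ℝ) ^ p * B) := by
        rw [sum_const, card_univ, Fintype.card_fin, nsmul_eq_mul, ← ENNReal.ofReal_natCast,
          ← mul_assoc, ← ENNReal.ofReal_mul (by positivity), ← Real.rpow_add_one'
            n.cast_nonneg (by linarith), sub_add_cancel, ← ENNReal.ofReal_mul (by positivity)]

/-- For `σp < 1` and jump points `c_1, …, c_n ∈ [0,T]`, the function
`f = ∑_{k=1}^n I_{c_k}` satisfies
`∫₀^T ∫₀^T |f(t) - f(s)|^p / |t-s|^{1+σp} dt ds ≤ n^p (2/(σp(1-σp))) T^{1-σp}`. -/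
theorem sum_jump_indicators_sobolev (T σ p : ℝ) (hT : 0 < T)
    (hσ : σ ∈ Set.Ioo (0 : ℝ) 1) (hp : 1 ≤ p) (hσp : σ * p < 1)
    (n : ℕ) (c : Fin n → ℝ) (hc : ∀ k, c k ∈ Set.Icc (0 : ℝ) T) :
    slobodeckijSeminorm T σ p (fun t => ∑ k, jumpInd (c k) t) ≤
      ENNReal.ofReal ((n : ℝ) ^ p * (2 / (σ * p * (1 - σ * p)) * T ^ (1 - σ * p))) :=
  sum_jump_indicators_sobolev_general T σ p hσ hp hσp n c hc
end

section
/- Let T ∈ (0, ∞), σ ∈ (0, 1) and p ∈ [1, ∞) with σp < 1, and let f : [0, T] → ℕ be nondecreasing with f(0) = 0. Then ∫₀^T ∫₀^T |f(t) − f(s)|^p / |t − s|^{1 + σp} dt ds ≤ f(T)^p · (2 / (σp(1 − σp))) T^{1 − σp}; in particular f ∈ W^{σ,p}(0, T). -/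
open MeasureTheory

lemma inner_bound {T α c s : ℝ} (hα : 0 < α) (hsc : s < c) (hcT : c ≤ T) :
    (∫⁻ t in Set.Ioc (0:ℝ) T,
        ENNReal.ofReal (if c ≤ t then (t - s) ^ (-(1+α)) else 0))
      ≤ ENNReal.ofReal ((c - s) ^ (-α) / α) := by
  have hind : (fun t : ℝ => ENNReal.ofReal (if c ≤ t then (t - s) ^ (-(1+α)) else 0))
      = Set.indicator (Set.Ici c) (fun t => ENNReal.ofReal ((t - s) ^ (-(1+α)))) := by
    ext t
    by_cases h : c ≤ t <;> simp [Set.indicator_apply, h]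
  rw [hind, lintegral_indicator measurableSet_Ici, Measure.restrict_restrict measurableSet_Ici]
  have hsub : Set.Ici c ∩ Set.Ioc (0:ℝ) T ⊆ Set.Icc c T := fun x hx => ⟨hx.1, hx.2.2⟩
  calc (∫⁻ t in Set.Ici c ∩ Set.Ioc (0:ℝ) T, ENNReal.ofReal ((t - s) ^ (-(1+α))))
      ≤ ∫⁻ t in Set.Icc c T, ENNReal.ofReal ((t - s) ^ (-(1+α))) :=
        lintegral_mono_set hsub
    _ = ENNReal.ofReal (∫ t in Set.Icc c T, (t - s) ^ (-(1+α))) := by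
        rw [MeasureTheory.ofReal_integral_eq_lintegral_ofReal]
        · refine ContinuousOn.integrableOn_compact isCompact_Icc ?_
          refine ContinuousOn.rpow_const (by fun_prop) ?_
          intro t ht
          exact Or.inl (by nlinarith [ht.1])
        · filter_upwards [ae_restrict_mem measurableSet_Icc] with t ht
          exact Real.rpow_nonneg (by linarith [ht.1]) _
    _ ≤ ENNReal.ofReal ((c - s) ^ (-α) / α) := by
        apply ENNReal.ofReal_le_ofReal
        rw [MeasureTheory.integral_Icc_eq_integral_Ioc,
          ← intervalIntegral.integral_of_le hcT,
          intervalIntegral.integral_comp_sub_right (fun u => u ^ (-(1+α))) s,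
          integral_rpow (Or.inr ⟨by intro h; nlinarith, by
            intro h
            rcases Set.mem_uIcc.1 h with ⟨h1, _⟩ | ⟨_, h2⟩
            · linarith
            · linarith⟩)]
        have h1 : -(1+α) + 1 = -α := by ring
        rw [h1]
        have h2 : (0:ℝ) ≤ (T - s) ^ (-α) := Real.rpow_nonneg (by linarith) _
        have h3 : ((T - s) ^ (-α) - (c - s) ^ (-α)) / (-α)
            = ((c - s) ^ (-α) - (T - s) ^ (-α)) / α := by
          rw [div_neg, ← neg_div]; ring_nf
        rw [h3]
        gcongr
        linarith

lemma P1_bound {T α c : ℝ} (hα : 0 < α) (hα1 : α < 1) (hc0 : 0 ≤ c) (hcT : c ≤ T) :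
    (∫⁻ s in Set.Ioc (0:ℝ) T, ∫⁻ t in Set.Ioc (0:ℝ) T,
        ENNReal.ofReal (if s ≤ c ∧ c ≤ t then (t - s) ^ (-(1+α)) else 0))
      ≤ ENNReal.ofReal (T ^ (1-α) / (α * (1-α))) := by
  have hne : ∀ᵐ s : ℝ ∂(volume.restrict (Set.Ioc (0:ℝ) T)), s ≠ c := by
    refine Filter.Eventually.filter_mono (ae_mono Measure.restrict_le_self) ?_
    exact ae_iff.2 (by simp)
  have step1 : (∫⁻ s in Set.Ioc (0:ℝ) T, ∫⁻ t in Set.Ioc (0:ℝ) T,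
        ENNReal.ofReal (if s ≤ c ∧ c ≤ t then (t - s) ^ (-(1+α)) else 0))
      ≤ ∫⁻ s in Set.Ioc (0:ℝ) T,
          ENNReal.ofReal (if s ≤ c then (c - s) ^ (-α) / α else 0) := by
    refine lintegral_mono_ae ?_
    filter_upwards [hne] with s hs
    rcases lt_or_gt_of_ne hs with h | h
    · have : (fun t : ℝ => ENNReal.ofReal (if s ≤ c ∧ c ≤ t then (t - s) ^ (-(1+α)) else 0))
          = fun t : ℝ => ENNReal.ofReal (if c ≤ t then (t - s) ^ (-(1+α)) else 0) := by
        ext t; by_cases ht : c ≤ t <;> simp [ht, le_of_lt h]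
      rw [this, if_pos (le_of_lt h)]
      exact inner_bound hα h hcT
    · have : (fun t : ℝ => ENNReal.ofReal (if s ≤ c ∧ c ≤ t then (t - s) ^ (-(1+α)) else 0))
          = fun _ : ℝ => 0 := by
        ext t; simp [not_le_of_gt h]
      rw [this]; simp
  refine le_trans step1 ?_
  have hind : (fun s : ℝ => ENNReal.ofReal (if s ≤ c then (c - s) ^ (-α) / α else 0))
      = Set.indicator (Set.Iic c) (fun s => ENNReal.ofReal ((c - s) ^ (-α) / α)) := by
    ext s; by_cases h : s ≤ c <;> simp [Set.indicator_apply, h]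
  rw [hind, lintegral_indicator measurableSet_Iic, Measure.restrict_restrict measurableSet_Iic]
  have hset : Set.Iic c ∩ Set.Ioc (0:ℝ) T = Set.Ioc 0 c := by
    ext s; constructor
    · rintro ⟨h1, h2, h3⟩; exact ⟨h2, h1⟩
    · rintro ⟨h1, h2⟩; exact ⟨h2, h1, le_trans h2 hcT⟩
  rw [hset]
  have hInt : IntegrableOn (fun s : ℝ => (c - s) ^ (-α) / α) (Set.Ioc 0 c) := by
    have h1 : IntervalIntegrable (fun x : ℝ => x ^ (-α)) volume 0 c :=
      intervalIntegral.intervalIntegrable_rpow' (by linarith)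
    have h2 := (h1.comp_sub_left c).symm
    simp only [sub_zero, sub_self] at h2
    have h3 := h2.div_const α
    rw [intervalIntegrable_iff] at h3
    rwa [Set.uIoc_of_le hc0] at h3
  calc (∫⁻ s in Set.Ioc (0:ℝ) c, ENNReal.ofReal ((c - s) ^ (-α) / α))
      = ENNReal.ofReal (∫ s in Set.Ioc (0:ℝ) c, (c - s) ^ (-α) / α) := by
        rw [MeasureTheory.ofReal_integral_eq_lintegral_ofReal hInt]
        filter_upwards [ae_restrict_mem measurableSet_Ioc] with s hs
        exact div_nonneg (Real.rpow_nonneg (by linarith [hs.2]) _) (le_of_lt hα)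
    _ ≤ ENNReal.ofReal (T ^ (1-α) / (α * (1-α))) := by
        apply ENNReal.ofReal_le_ofReal
        rw [← intervalIntegral.integral_of_le hc0, intervalIntegral.integral_div,
          intervalIntegral.integral_comp_sub_left (fun u => u ^ (-α)) c]
        simp only [sub_zero, sub_self]
        rw [integral_rpow (Or.inl (by linarith)),
          Real.zero_rpow (by intro h; linarith), sub_zero, div_div]
        have he : (-α + 1) * α = α * (1 - α) := by ring
        rw [he]
        have hcc : c ^ (-α + 1) ≤ T ^ (-α + 1) :=
          Real.rpow_le_rpow hc0 hcT (by linarith)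
        have h1a : (1:ℝ) - α = -α + 1 := by ring
        rw [h1a]
        gcongr
        nlinarith

lemma Jk_bound {T α : ℝ} (hT : 0 < T) (hα : 0 < α) (hα1 : α < 1) (A : Set ℝ)
    (hA : A ⊆ Set.Ioc 0 T) (hup : ∀ x ∈ A, ∀ y, x ≤ y → y ≤ T → y ∈ A) :
    (∫⁻ s in Set.Ioc (0:ℝ) T, ∫⁻ t in Set.Ioc (0:ℝ) T,
        ENNReal.ofReal (|A.indicator (fun _ => (1:ℝ)) t - A.indicator (fun _ => (1:ℝ)) s|
          / |t - s| ^ (1+α)))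
      ≤ ENNReal.ofReal (2 * (T ^ (1-α) / (α * (1-α)))) := by
  rcases A.eq_empty_or_nonempty with rfl | hne
  · simp
  -- c = sInf A
  obtain ⟨a0, ha0⟩ := hne
  have hbdd : BddBelow A := ⟨0, fun x hx => (hA hx).1.le⟩
  set c := sInf A with hc
  have hc0 : 0 ≤ c := le_csInf ⟨a0, ha0⟩ (fun x hx => (hA hx).1.le)
  have hcT : c ≤ T := le_trans (csInf_le hbdd ha0) (hA ha0).2
  -- pointwise bound
  have hpt : ∀ s ∈ Set.Ioc (0:ℝ) T, ∀ t ∈ Set.Ioc (0:ℝ) T,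
      ENNReal.ofReal (|A.indicator (fun _ => (1:ℝ)) t - A.indicator (fun _ => (1:ℝ)) s|
          / |t - s| ^ (1+α))
      ≤ ENNReal.ofReal (if s ≤ c ∧ c ≤ t then (t - s) ^ (-(1+α)) else 0)
        + ENNReal.ofReal (if t ≤ c ∧ c ≤ s then (s - t) ^ (-(1+α)) else 0) := by
    intro s hs t ht
    have key : ∀ u ∈ Set.Ioc (0:ℝ) T, ∀ v ∈ Set.Ioc (0:ℝ) T, v ∈ A → u ∉ A →
        u ≤ c ∧ c ≤ v ∧ u < v := by
      intro u hu v hv hvA huA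
      have hlb : ∀ x ∈ A, u < x := by
        intro x hx
        by_contra hle
        exact huA (hup x hx u (not_lt.1 hle) hu.2)
      exact ⟨le_csInf ⟨a0, ha0⟩ (fun x hx => (hlb x hx).le), csInf_le hbdd hvA, hlb v hvA⟩
    by_cases htA : t ∈ A <;> by_cases hsA : s ∈ A
    · simp [Set.indicator_of_mem, htA, hsA]
    · obtain ⟨h1, h2, h3⟩ := key s hs t ht htA hsA
      rw [Set.indicator_of_mem htA, Set.indicator_of_notMem hsA]
      have habs : |t - s| = t - s := abs_of_pos (by linarith)
      have hval : |(1:ℝ) - 0| / |t - s| ^ (1+α) = (t - s) ^ (-(1+α)) := by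
        rw [habs, Real.rpow_neg (by linarith)]
        simp [div_eq_mul_inv]
      rw [hval, if_pos ⟨h1, h2⟩]
      exact le_add_right le_rfl
    · obtain ⟨h1, h2, h3⟩ := key t ht s hs hsA htA
      rw [Set.indicator_of_mem hsA, Set.indicator_of_notMem htA]
      have habs : |t - s| = s - t := by rw [abs_sub_comm]; exact abs_of_pos (by linarith)
      have hval : |(0:ℝ) - 1| / |t - s| ^ (1+α) = (s - t) ^ (-(1+α)) := by
        rw [habs, Real.rpow_neg (by linarith)]
        simp [div_eq_mul_inv]
      rw [hval, show (if t ≤ c ∧ c ≤ s then (s - t) ^ (-(1+α)) else 0)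
        = (s - t) ^ (-(1+α)) from if_pos ⟨h1, h2⟩]
      exact le_add_left le_rfl
    · simp [Set.indicator_of_notMem, htA, hsA]
  -- measurability of the two pieces
  have hm1 : Measurable (fun q : ℝ × ℝ =>
      ENNReal.ofReal (if q.1 ≤ c ∧ c ≤ q.2 then (q.2 - q.1) ^ (-(1+α)) else 0)) := by
    apply Measurable.ennreal_ofReal
    refine Measurable.ite ?_ ?_ measurable_const
    · exact (measurableSet_le measurable_fst measurable_const).inter
        (measurableSet_le measurable_const measurable_snd)
    · exact (measurable_snd.sub measurable_fst).pow measurable_const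
  have hm2 : Measurable (fun q : ℝ × ℝ =>
      ENNReal.ofReal (if q.2 ≤ c ∧ c ≤ q.1 then (q.1 - q.2) ^ (-(1+α)) else 0)) := by
    apply Measurable.ennreal_ofReal
    refine Measurable.ite ?_ ?_ measurable_const
    · exact (measurableSet_le measurable_snd measurable_const).inter
        (measurableSet_le measurable_const measurable_fst)
    · exact (measurable_fst.sub measurable_snd).pow measurable_const
  -- main estimate
  calc (∫⁻ s in Set.Ioc (0:ℝ) T, ∫⁻ t in Set.Ioc (0:ℝ) T,
        ENNReal.ofReal (|A.indicator (fun _ => (1:ℝ)) t - A.indicator (fun _ => (1:ℝ)) s|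
          / |t - s| ^ (1+α)))
      ≤ ∫⁻ s in Set.Ioc (0:ℝ) T, ∫⁻ t in Set.Ioc (0:ℝ) T,
          (ENNReal.ofReal (if s ≤ c ∧ c ≤ t then (t - s) ^ (-(1+α)) else 0)
            + ENNReal.ofReal (if t ≤ c ∧ c ≤ s then (s - t) ^ (-(1+α)) else 0)) := by
        refine lintegral_mono_ae ?_
        filter_upwards [ae_restrict_mem measurableSet_Ioc] with s hs
        refine lintegral_mono_ae ?_
        filter_upwards [ae_restrict_mem measurableSet_Ioc] with t ht
        exact hpt s hs t ht
    _ = (∫⁻ s in Set.Ioc (0:ℝ) T, ∫⁻ t in Set.Ioc (0:ℝ) T,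
          ENNReal.ofReal (if s ≤ c ∧ c ≤ t then (t - s) ^ (-(1+α)) else 0))
        + (∫⁻ s in Set.Ioc (0:ℝ) T, ∫⁻ t in Set.Ioc (0:ℝ) T,
          ENNReal.ofReal (if t ≤ c ∧ c ≤ s then (s - t) ^ (-(1+α)) else 0)) := by
        rw [← lintegral_add_left']
        · congr 1
          ext s
          rw [← lintegral_add_left']
          exact (hm1.comp ((measurable_const.prodMk measurable_id) : Measurable fun t : ℝ => (s, t))).aemeasurable
        · exact (Measurable.lintegral_prod_right
            (f := fun s t => ENNReal.ofReal (if s ≤ c ∧ c ≤ t then (t - s) ^ (-(1+α)) else 0))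
            hm1).aemeasurable
    _ ≤ ENNReal.ofReal (T ^ (1-α) / (α * (1-α))) + ENNReal.ofReal (T ^ (1-α) / (α * (1-α))) := by
        refine add_le_add (P1_bound hα hα1 hc0 hcT) ?_
        rw [lintegral_lintegral_swap hm2.aemeasurable]
        exact P1_bound hα hα1 hc0 hcT
    _ = ENNReal.ofReal (2 * (T ^ (1-α) / (α * (1-α)))) := by
        have hnn : 0 ≤ T ^ (1-α) / (α * (1-α)) :=
          div_nonneg (Real.rpow_nonneg hT.le _) (by nlinarith)
        rw [← ENNReal.ofReal_add hnn hnn]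
        congr 1
        ring

/-- For `σp < 1`, every nondecreasing `ℕ`-valued function `f` on `[0,T]` with `f(0) = 0`
satisfies `∫₀^T ∫₀^T |f(t) - f(s)|^p / |t-s|^{1+σp} dt ds ≤ f(T)^p (2/(σp(1-σp))) T^{1-σp}`;
in particular `f ∈ W^{σ,p}(0,T)`. -/
theorem monotone_nat_valued_sobolev (T σ p : ℝ) (hT : 0 < T)
    (hσ : σ ∈ Set.Ioo (0 : ℝ) 1) (hp : 1 ≤ p) (hσp : σ * p < 1)
    (f : ℝ → ℕ) (hmono : MonotoneOn f (Set.Icc 0 T)) (hf0 : f 0 = 0) :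
    slobodeckijSeminorm T σ p (fun t => (f t : ℝ)) ≤
        ENNReal.ofReal ((f T : ℝ) ^ p * (2 / (σ * p * (1 - σ * p)) * T ^ (1 - σ * p))) ∧
      (∫⁻ t in Set.Ioc (0 : ℝ) T, ENNReal.ofReal ((f t : ℝ) ^ p)) +
          slobodeckijSeminorm T σ p (fun t => (f t : ℝ)) < ⊤ := by
  obtain ⟨hσ0, hσ1⟩ := hσ
  have hp0 : 0 < p := lt_of_lt_of_le one_pos hp
  set α := σ * p with hαdef
  have hα : 0 < α := mul_pos hσ0 hp0
  have hα1 : α < 1 := hσp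
  set N := f T with hNdef
  set A : ℕ → Set ℝ := fun k => {t | t ∈ Set.Ioc (0:ℝ) T ∧ k ≤ f t} with hAdef
  have hAsub : ∀ k, A k ⊆ Set.Ioc (0:ℝ) T := fun k x hx => hx.1
  have hup : ∀ k, ∀ x ∈ A k, ∀ y, x ≤ y → y ≤ T → y ∈ A k := by
    intro k x hx y hxy hyT
    have hy0 : (0:ℝ) < y := lt_of_lt_of_le hx.1.1 hxy
    exact ⟨⟨hy0, hyT⟩, le_trans hx.2 (hmono ⟨hx.1.1.le, hx.1.2⟩ ⟨hy0.le, hyT⟩ hxy)⟩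
  have hAm : ∀ k, MeasurableSet (A k) := by
    intro k
    refine Set.OrdConnected.measurableSet ⟨?_⟩
    intro x hx y hy z hz
    exact hup k x hx z hz.1 (le_trans hz.2 hy.1.2)
  set ind : ℕ → ℝ → ℝ := fun k => (A k).indicator (fun _ => (1:ℝ)) with hinddef
  have hfle : ∀ t ∈ Set.Ioc (0:ℝ) T, f t ≤ N :=
    fun t ht => hmono ⟨ht.1.le, ht.2⟩ ⟨hT.le, le_refl T⟩ ht.2
  have hsum : ∀ t ∈ Set.Ioc (0:ℝ) T, (∑ k ∈ Finset.Icc 1 N, ind k t) = (f t : ℝ) := by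
    intro t ht
    have hft := hfle t ht
    have h1 : ∀ k, ind k t = if k ≤ f t then (1:ℝ) else 0 := by
      intro k
      by_cases h : k ≤ f t
      · rw [if_pos h]
        exact Set.indicator_of_mem (by simp only [hAdef, Set.mem_setOf_eq]; exact ⟨ht, h⟩) _
      · rw [if_neg h]; exact Set.indicator_of_notMem (fun hmem => h hmem.2) _
    simp_rw [h1]
    rw [Finset.sum_boole]
    have h2 : (Finset.Icc 1 N).filter (fun k => k ≤ f t) = Finset.Icc 1 (f t) := by
      ext k; simp only [Finset.mem_filter, Finset.mem_Icc]; omega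
    rw [h2, Nat.card_Icc]
    simp
  -- pointwise bound
  have hpt : ∀ s ∈ Set.Ioc (0:ℝ) T, ∀ t ∈ Set.Ioc (0:ℝ) T,
      ENNReal.ofReal (|(f t : ℝ) - f s| ^ p / |t - s| ^ (1 + α))
        ≤ ENNReal.ofReal ((N:ℝ) ^ (p-1)) *
            ∑ k ∈ Finset.Icc 1 N,
              ENNReal.ofReal (|ind k t - ind k s| / |t - s| ^ (1 + α)) := by
    intro s hs t ht
    set D := |t - s| ^ (1 + α) with hDdef
    have hD0 : 0 ≤ D := Real.rpow_nonneg (abs_nonneg _) _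
    set S := ∑ k ∈ Finset.Icc 1 N, |ind k t - ind k s| with hSdef
    have haS : |(f t : ℝ) - f s| ≤ S := by
      have h : (f t : ℝ) - f s = ∑ k ∈ Finset.Icc 1 N, (ind k t - ind k s) := by
        rw [Finset.sum_sub_distrib, hsum t ht, hsum s hs]
      rw [h]
      exact Finset.abs_sum_le_sum_abs _ _
    have haN : |(f t : ℝ) - f s| ≤ (N:ℝ) := by
      have h1 : (f t : ℝ) ≤ N := Nat.cast_le.2 (hfle t ht)
      have h2 : (f s : ℝ) ≤ N := Nat.cast_le.2 (hfle s hs)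
      have h3 : (0:ℝ) ≤ (f t : ℝ) := Nat.cast_nonneg _
      have h4 : (0:ℝ) ≤ (f s : ℝ) := Nat.cast_nonneg _
      rw [abs_sub_le_iff]
      constructor <;> linarith
    have hS0 : 0 ≤ S := Finset.sum_nonneg (fun k _ => abs_nonneg _)
    have hNn : (0:ℝ) ≤ (N:ℝ) ^ (p-1) := Real.rpow_nonneg (Nat.cast_nonneg _) _
    have hkey : |(f t : ℝ) - f s| ^ p ≤ (N:ℝ) ^ (p-1) * S := by
      have hstep : |(f t : ℝ) - f s| ^ p ≤ (N:ℝ) ^ (p-1) * |(f t : ℝ) - f s| := by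
        rcases eq_or_lt_of_le (abs_nonneg ((f t : ℝ) - f s)) with h0 | h0
        · rw [← h0, Real.zero_rpow (ne_of_gt hp0)]
          simp
        · have e1 : |(f t : ℝ) - f s| ^ p
              = |(f t : ℝ) - f s| ^ (p-1) * |(f t : ℝ) - f s| := by
            have e := Real.rpow_add h0 (p-1) 1
            rw [Real.rpow_one, show p - 1 + 1 = p by ring] at e
            exact e
          rw [e1]
          exact mul_le_mul_of_nonneg_right
            (Real.rpow_le_rpow (abs_nonneg _) haN (by linarith)) (abs_nonneg _)
      exact le_trans hstep (mul_le_mul_of_nonneg_left haS hNn)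
    have hdiv : |(f t : ℝ) - f s| ^ p / D ≤ ((N:ℝ) ^ (p-1) * S) / D :=
      div_le_div_of_nonneg_right hkey hD0
    calc ENNReal.ofReal (|(f t : ℝ) - f s| ^ p / D)
        ≤ ENNReal.ofReal (((N:ℝ) ^ (p-1) * S) / D) := ENNReal.ofReal_le_ofReal hdiv
      _ = ENNReal.ofReal ((N:ℝ) ^ (p-1)) *
            ∑ k ∈ Finset.Icc 1 N,
              ENNReal.ofReal (|ind k t - ind k s| / D) := by
          rw [mul_div_assoc, ENNReal.ofReal_mul hNn, hSdef, Finset.sum_div,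
            ENNReal.ofReal_sum_of_nonneg (fun k _ => div_nonneg (abs_nonneg _) hD0)]
  -- measurability of each term
  have hmind : ∀ k, Measurable (fun q : ℝ × ℝ =>
      ENNReal.ofReal (|ind k q.2 - ind k q.1| / |q.2 - q.1| ^ (1 + α))) := by
    intro k
    have h1 : Measurable (ind k) := measurable_const.indicator (hAm k)
    apply Measurable.ennreal_ofReal
    exact (((h1.comp measurable_snd).sub (h1.comp measurable_fst)).abs).div
      (((measurable_snd.sub measurable_fst).abs).pow measurable_const)
  set C := ENNReal.ofReal ((N:ℝ) ^ (p-1)) with hCdef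
  have hCne : C ≠ ⊤ := ENNReal.ofReal_ne_top
  have hbound : slobodeckijSeminorm T σ p (fun t => (f t : ℝ))
      ≤ ENNReal.ofReal ((N : ℝ) ^ p * (2 / (α * (1 - α)) * T ^ (1 - α))) := by
    have hstep1 : slobodeckijSeminorm T σ p (fun t => (f t : ℝ))
        ≤ C * ∑ k ∈ Finset.Icc 1 N, (∫⁻ s in Set.Ioc (0:ℝ) T, ∫⁻ t in Set.Ioc (0:ℝ) T,
            ENNReal.ofReal (|ind k t - ind k s| / |t - s| ^ (1 + α))) := by
      unfold slobodeckijSeminorm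
      calc (∫⁻ s in Set.Ioc (0:ℝ) T, ∫⁻ t in Set.Ioc (0:ℝ) T,
            ENNReal.ofReal (|(f t : ℝ) - f s| ^ p / |t - s| ^ (1 + σ * p)))
          ≤ ∫⁻ s in Set.Ioc (0:ℝ) T, ∫⁻ t in Set.Ioc (0:ℝ) T,
              (C * ∑ k ∈ Finset.Icc 1 N,
                ENNReal.ofReal (|ind k t - ind k s| / |t - s| ^ (1 + α))) := by
            refine lintegral_mono_ae ?_
            filter_upwards [ae_restrict_mem measurableSet_Ioc] with s hs
            refine lintegral_mono_ae ?_
            filter_upwards [ae_restrict_mem measurableSet_Ioc] with t ht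
            exact hpt s hs t ht
        _ = C * ∑ k ∈ Finset.Icc 1 N, (∫⁻ s in Set.Ioc (0:ℝ) T, ∫⁻ t in Set.Ioc (0:ℝ) T,
              ENNReal.ofReal (|ind k t - ind k s| / |t - s| ^ (1 + α))) := by
            have hinner : ∀ s : ℝ, (∫⁻ t in Set.Ioc (0:ℝ) T,
                (C * ∑ k ∈ Finset.Icc 1 N,
                  ENNReal.ofReal (|ind k t - ind k s| / |t - s| ^ (1 + α))))
                = C * ∑ k ∈ Finset.Icc 1 N, (∫⁻ t in Set.Ioc (0:ℝ) T,
                  ENNReal.ofReal (|ind k t - ind k s| / |t - s| ^ (1 + α))) := by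
              intro s
              rw [lintegral_const_mul' _ _ hCne, lintegral_finset_sum']
              intro k _
              exact ((hmind k).comp
                ((measurable_const.prodMk measurable_id) : Measurable fun t : ℝ => (s, t))).aemeasurable
            simp_rw [hinner]
            rw [lintegral_const_mul' _ _ hCne, lintegral_finset_sum']
            intro k _
            exact (Measurable.lintegral_prod_right
              (f := fun s t => ENNReal.ofReal (|ind k t - ind k s| / |t - s| ^ (1 + α)))
              (hmind k)).aemeasurable
    have hstep2 : (∑ k ∈ Finset.Icc 1 N, (∫⁻ s in Set.Ioc (0:ℝ) T, ∫⁻ t in Set.Ioc (0:ℝ) T,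
          ENNReal.ofReal (|ind k t - ind k s| / |t - s| ^ (1 + α))))
        ≤ (N : ENNReal) * ENNReal.ofReal (2 * (T ^ (1-α) / (α * (1-α)))) := by
      calc (∑ k ∈ Finset.Icc 1 N, (∫⁻ s in Set.Ioc (0:ℝ) T, ∫⁻ t in Set.Ioc (0:ℝ) T,
            ENNReal.ofReal (|ind k t - ind k s| / |t - s| ^ (1 + α))))
          ≤ ∑ _k ∈ Finset.Icc 1 N, ENNReal.ofReal (2 * (T ^ (1-α) / (α * (1-α)))) := by
            refine Finset.sum_le_sum (fun k _ => ?_)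
            exact Jk_bound hT hα hα1 (A k) (hAsub k) (hup k)
        _ = (N : ENNReal) * ENNReal.ofReal (2 * (T ^ (1-α) / (α * (1-α)))) := by
            rw [Finset.sum_const, Nat.card_Icc]
            simp [nsmul_eq_mul]
    calc slobodeckijSeminorm T σ p (fun t => (f t : ℝ))
        ≤ C * ((N : ENNReal) * ENNReal.ofReal (2 * (T ^ (1-α) / (α * (1-α))))) :=
          le_trans hstep1 (mul_le_mul_right hstep2 C)
      _ ≤ ENNReal.ofReal ((N : ℝ) ^ p * (2 / (α * (1 - α)) * T ^ (1 - α))) := by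
          rw [hCdef, ← ENNReal.ofReal_natCast N, ← ENNReal.ofReal_mul (Nat.cast_nonneg _),
            ← ENNReal.ofReal_mul (Real.rpow_nonneg (Nat.cast_nonneg _) _)]
          apply ENNReal.ofReal_le_ofReal
          rcases Nat.eq_zero_or_pos N with h0 | h0
          · rw [h0]
            simp only [Nat.cast_zero, Real.zero_rpow (ne_of_gt hp0)]
            simp
          · have hN0 : (0:ℝ) < N := Nat.cast_pos.2 h0
            have e1 : (N:ℝ) ^ (p-1) * (N:ℝ) = (N:ℝ) ^ p := by
              have e := Real.rpow_add hN0 (p-1) 1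
              rw [Real.rpow_one, show p - 1 + 1 = p by ring] at e
              linarith [e]
            calc (N:ℝ) ^ (p-1) * ((N:ℝ) * (2 * (T ^ (1-α) / (α * (1-α)))))
                = ((N:ℝ) ^ (p-1) * (N:ℝ)) * (2 * (T ^ (1-α) / (α * (1-α)))) := by ring
              _ = (N:ℝ) ^ p * (2 / (α * (1 - α)) * T ^ (1 - α)) := by
                  rw [e1]; ring
              _ ≤ (N:ℝ) ^ p * (2 / (α * (1 - α)) * T ^ (1 - α)) := le_rfl
  constructor
  · exact hbound
  · have hfin2 : slobodeckijSeminorm T σ p (fun t => (f t : ℝ)) < ⊤ :=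
      lt_of_le_of_lt hbound ENNReal.ofReal_lt_top
    have hfin1 : (∫⁻ t in Set.Ioc (0 : ℝ) T, ENNReal.ofReal ((f t : ℝ) ^ p)) < ⊤ := by
      have h1 : (∫⁻ t in Set.Ioc (0 : ℝ) T, ENNReal.ofReal ((f t : ℝ) ^ p))
          ≤ ∫⁻ _t in Set.Ioc (0 : ℝ) T, ENNReal.ofReal ((N : ℝ) ^ p) := by
        refine lintegral_mono_ae ?_
        filter_upwards [ae_restrict_mem measurableSet_Ioc] with t ht
        exact ENNReal.ofReal_le_ofReal
          (Real.rpow_le_rpow (Nat.cast_nonneg _) (Nat.cast_le.2 (hfle t ht)) hp0.le)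
      refine lt_of_le_of_lt h1 ?_
      rw [setLIntegral_const]
      exact ENNReal.mul_lt_top ENNReal.ofReal_lt_top (by rw [Real.volume_Ioc]; exact ENNReal.ofReal_lt_top)
    exact ENNReal.add_lt_top.2 ⟨hfin1, hfin2⟩
end

section
/- Let T ∈ (0, ∞) and γ ∈ (−1/2, 1/2] with γ ≠ 0, and define g : (0, T] → ℝ by g(t) = t^γ. Then ∫₀^T t^{2γ} dt < ∞, and for every σ ∈ (0, γ + 1/2) one has ∫₀^T ∫₀^T |t^γ − s^γ|² / |t − s|^{1 + 2σ} ds dt < ∞; in other words g ∈ W^{σ,2}(0, T) for every σ ∈ (0, γ + 1/2). -/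
/-!
Put `β = γ - σ - 1/2 ∈ (-1, 0)`. For `0 < s < t` interpolate (log-convexly) between the
mean value bound `|t^γ - s^γ| ≤ s^(γ-1) (t - s)` and the bound `|t^γ - s^γ| ≤ s^γ` (for `γ ≤ 0`),
resp. `|t^γ - s^γ| ≤ (t - s)^γ` (for `γ ≥ 0`); the exponent `(γ + σ + 1/2)/2` on `t - s` gives
`|t^γ - s^γ|² / |t - s|^(1+2σ) ≤ (s^β + t^β) |t - s|^β`.
By Tonelli and symmetry it remains to bound `∫∫ t^β |t - s|^β`, and after translation the inner
integral is at most `∫_{|x| < T} |x|^β dx < ∞`, uniformly in `t`.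
-/

open MeasureTheory Real Set

namespace Real

lemma abs_rpow_sub_rpow_le_mul_sub {γ s t : ℝ} (hγ : γ ≤ 1) (hs : 0 < s) (hst : s ≤ t) :
    |t ^ γ - s ^ γ| ≤ |γ| * s ^ (γ - 1) * (t - s) := by
  have hderiv : ∀ x ∈ Ici s, HasDerivWithinAt (· ^ γ) (γ * x ^ (γ - 1)) (Ici s) x :=
    fun x hx => (hasDerivAt_rpow_const (Or.inl (hs.trans_le hx).ne')).hasDerivWithinAt
  have hbound : ∀ x ∈ Ici s, ‖γ * x ^ (γ - 1)‖ ≤ |γ| * s ^ (γ - 1) := fun x hx => by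
    rw [norm_mul, norm_eq_abs, norm_of_nonneg (rpow_nonneg (hs.le.trans hx) _)]
    exact mul_le_mul_of_nonneg_left (rpow_le_rpow_of_nonpos hs hx (by linarith)) (abs_nonneg γ)
  simpa [norm_eq_abs, abs_of_nonneg (sub_nonneg.2 hst)] using
    (convex_Ici s).norm_image_sub_le_of_norm_hasDerivWithin_le hderiv hbound self_mem_Ici hst

lemma abs_rpow_sub_rpow_le_rpow_of_nonpos {γ s t : ℝ} (hγ : γ ≤ 0) (hs : 0 < s) (hst : s ≤ t) :
    |t ^ γ - s ^ γ| ≤ s ^ γ := by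
  have hanti := rpow_le_rpow_of_nonpos hs hst hγ
  rw [abs_sub_comm, abs_of_nonneg (sub_nonneg.2 hanti)]
  linarith [rpow_nonneg (hs.le.trans hst) γ]

lemma abs_rpow_sub_rpow_le_rpow_sub {γ s t : ℝ} (hγ₀ : 0 ≤ γ) (hγ₁ : γ ≤ 1) (hs : 0 ≤ s)
    (hst : s ≤ t) : |t ^ γ - s ^ γ| ≤ (t - s) ^ γ := by
  have hmono := rpow_le_rpow hs hst hγ₀
  have hsub := rpow_add_le_add_rpow hs (sub_nonneg.2 hst) hγ₀ hγ₁
  rw [add_sub_cancel] at hsub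
  rw [abs_of_nonneg (sub_nonneg.2 hmono)]
  linarith

lemma le_rpow_mul_rpow_of_le_of_le {x s u a₀ b₀ a₁ b₁ θ : ℝ} (hx : 0 ≤ x) (hs : 0 < s)
    (hu : 0 < u) (hθ₀ : 0 ≤ θ) (hθ₁ : θ ≤ 1) (h₀ : x ≤ s ^ a₀ * u ^ b₀)
    (h₁ : x ≤ s ^ a₁ * u ^ b₁) :
    x ≤ s ^ ((1 - θ) * a₀ + θ * a₁) * u ^ ((1 - θ) * b₀ + θ * b₁) :=
  calc x = x ^ (1 - θ) * x ^ θ := by rw [← rpow_add' hx (by norm_num), sub_add_cancel, rpow_one]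
    _ ≤ (s ^ a₀ * u ^ b₀) ^ (1 - θ) * (s ^ a₁ * u ^ b₁) ^ θ := by gcongr
    _ = s ^ ((1 - θ) * a₀ + θ * a₁) * u ^ ((1 - θ) * b₀ + θ * b₁) := by
      simp only [mul_rpow (rpow_nonneg hs.le _) (rpow_nonneg hu.le _), ← rpow_mul hs.le,
        ← rpow_mul hu.le, rpow_add hs, rpow_add hu]
      ring_nf

lemma abs_rpow_sub_rpow_le_rpow_mul_rpow_sub {γ b s t : ℝ} (hγ : -1 ≤ γ) (hb₀ : 0 ≤ b)
    (hγb : γ ≤ b) (hb₁ : b ≤ 1) (hs : 0 < s) (hst : s < t) :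
    |t ^ γ - s ^ γ| ≤ s ^ (γ - b) * (t - s) ^ b := by
  have hu : 0 < t - s := sub_pos.2 hst
  have hlip : |t ^ γ - s ^ γ| ≤ s ^ (γ - 1) * (t - s) ^ (1 : ℝ) := by
    rw [rpow_one]
    calc _ ≤ |γ| * s ^ (γ - 1) * (t - s) := abs_rpow_sub_rpow_le_mul_sub (hγb.trans hb₁) hs hst.le
      _ ≤ 1 * s ^ (γ - 1) * (t - s) := by gcongr; exact abs_le.2 ⟨hγ, hγb.trans hb₁⟩
      _ = _ := by rw [one_mul]
  rcases hb₁.eq_or_lt with rfl | hb₁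
  · exact hlip
  rcases le_total γ 0 with hγ₀ | hγ₀
  · have hhold : |t ^ γ - s ^ γ| ≤ s ^ (γ - 0) * (t - s) ^ (0 : ℝ) := by
      simpa using abs_rpow_sub_rpow_le_rpow_of_nonpos hγ₀ hs hst.le
    convert le_rpow_mul_rpow_of_le_of_le (abs_nonneg _) hs hu hb₀ hb₁.le hhold hlip using 3 <;>
      ring
  · have hhold : |t ^ γ - s ^ γ| ≤ s ^ (γ - γ) * (t - s) ^ γ := by
      simpa using abs_rpow_sub_rpow_le_rpow_sub hγ₀ (hγb.trans hb₁.le) hs.le hst.le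
    have h1γ : 0 < 1 - γ := by linarith
    convert le_rpow_mul_rpow_of_le_of_le (θ := (b - γ) / (1 - γ)) (abs_nonneg _) hs hu
      (div_nonneg (by linarith) h1γ.le) ((div_le_one h1γ).2 (by linarith)) hhold hlip
      using 3 <;> field_simp <;> ring

lemma sq_abs_rpow_sub_rpow_div_rpow_le {γ σ s t : ℝ} (hγ : -1 ≤ γ) (hγσ : γ ≤ σ + 1 / 2)
    (hσ₀ : 0 ≤ γ + σ + 1 / 2) (hσ₁ : γ + σ ≤ 3 / 2) (hs : 0 < s) (ht : 0 < t) :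
    |t ^ γ - s ^ γ| ^ 2 / |t - s| ^ (1 + 2 * σ) ≤
      s ^ (γ - σ - 1 / 2) * |t - s| ^ (γ - σ - 1 / 2) +
        t ^ (γ - σ - 1 / 2) * |t - s| ^ (γ - σ - 1 / 2) := by
  wlog hst : s ≤ t generalizing s t
  · rw [abs_sub_comm t, abs_sub_comm (t ^ γ), add_comm (s ^ _ * _)]
    exact this ht hs (not_le.1 hst).le
  rcases hst.eq_or_lt with rfl | hst
  · simp only [sub_self, abs_zero, zero_pow two_ne_zero, zero_div]
    positivity
  have hu : 0 < t - s := sub_pos.2 hst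
  have hb := abs_rpow_sub_rpow_le_rpow_mul_rpow_sub (b := (γ + σ + 1 / 2) / 2) hγ
    (by linarith) (by linarith) (by linarith) hs hst
  rw [abs_of_pos hu, div_le_iff₀ (rpow_pos_of_pos hu _)]
  calc |t ^ γ - s ^ γ| ^ 2
      ≤ (s ^ (γ - (γ + σ + 1 / 2) / 2) * (t - s) ^ ((γ + σ + 1 / 2) / 2)) ^ 2 := by gcongr
    _ = s ^ (γ - σ - 1 / 2) * (t - s) ^ (γ - σ - 1 / 2) * (t - s) ^ (1 + 2 * σ) := by
      rw [mul_assoc, ← rpow_add hu, mul_pow, ← rpow_mul_natCast hs.le, ← rpow_mul_natCast hu.le]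
      ring_nf
    _ ≤ _ := by gcongr; exact le_add_of_nonneg_right (by positivity)

end Real

lemma setLIntegral_ofReal_rpow_lt_top {p : ℝ} (hp : -1 < p) (a b : ℝ) :
    ∫⁻ t in Ioc a b, ENNReal.ofReal (t ^ p) < ⊤ :=
  (intervalIntegral.intervalIntegrable_rpow' hp).1.lintegral_lt_top

lemma setLIntegral_ofReal_abs_rpow_ball_lt_top {β : ℝ} (hβ : -1 < β) (r : ℝ) :
    ∫⁻ x in Metric.ball (0 : ℝ) r, ENNReal.ofReal (|x| ^ β) < ⊤ := by
  refine Integrable.lintegral_lt_top (integrableOn_ball_of_norm_le_rpow (C := 1) (α := -β)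
    (by simp) (by rw [Module.finrank_self, Nat.cast_one]; linarith)
    (Filter.Eventually.of_forall fun x => ?_) (measurable_abs.pow_const β).aestronglyMeasurable)
  simp [norm_of_nonneg (rpow_nonneg (abs_nonneg x) β)]

lemma setLIntegral_comp_sub_le_ball {a b t : ℝ} (ht : t ∈ Ioc a b) (F : ℝ → ENNReal) :
    ∫⁻ s in Ioc a b, F (t - s) ≤ ∫⁻ x in Metric.ball (0 : ℝ) (b - a), F x :=
  calc ∫⁻ s in Ioc a b, F (t - s)
      = ∫⁻ s in Ioc a b, (Metric.ball 0 (b - a)).indicator F (t - s) := by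
        refine setLIntegral_congr_fun measurableSet_Ioc fun s hs => (indicator_of_mem ?_ F).symm
        rw [mem_ball_zero_iff, norm_eq_abs, abs_lt]
        constructor <;> linarith [ht.1, ht.2, hs.1, hs.2]
    _ ≤ ∫⁻ s, (Metric.ball 0 (b - a)).indicator F (t - s) := setLIntegral_le_lintegral _ _
    _ = ∫⁻ x in Metric.ball (0 : ℝ) (b - a), F x := by
        rw [lintegral_sub_left_eq_self (fun x => (Metric.ball 0 (b - a)).indicator F x) t,
          lintegral_indicator Metric.isOpen_ball.measurableSet]

lemma lintegral_rpow_mul_abs_sub_rpow_lt_top {β : ℝ} (hβ : -1 < β) (T : ℝ) :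
    ∫⁻ t in Ioc 0 T, ∫⁻ s in Ioc 0 T, ENNReal.ofReal (t ^ β * |t - s| ^ β) < ⊤ := by
  set C := ∫⁻ x in Metric.ball (0 : ℝ) T, ENNReal.ofReal (|x| ^ β)
  have hC : C < ⊤ := setLIntegral_ofReal_abs_rpow_ball_lt_top hβ T
  calc ∫⁻ t in Ioc 0 T, ∫⁻ s in Ioc 0 T, ENNReal.ofReal (t ^ β * |t - s| ^ β)
      ≤ ∫⁻ t in Ioc 0 T, ENNReal.ofReal (t ^ β) * C := by
        refine setLIntegral_mono' measurableSet_Ioc fun t ht => ?_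
        simp_rw [ENNReal.ofReal_mul (rpow_nonneg ht.1.le β)]
        rw [lintegral_const_mul' _ _ ENNReal.ofReal_ne_top]
        gcongr
        simpa using setLIntegral_comp_sub_le_ball ht (fun x => ENNReal.ofReal (|x| ^ β))
    _ = (∫⁻ t in Ioc 0 T, ENNReal.ofReal (t ^ β)) * C := lintegral_mul_const' _ _ hC.ne
    _ < ⊤ := ENNReal.mul_lt_top (setLIntegral_ofReal_rpow_lt_top hβ 0 T) hC

lemma lintegral_lintegral_add_swap_lt_top {α : Type*} [MeasurableSpace α] {μ : Measure α}
    [SFinite μ] {G : α → α → ENNReal} (hG : Measurable (Function.uncurry G))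
    (hfin : ∫⁻ t, ∫⁻ s, G t s ∂μ ∂μ < ⊤) :
    ∫⁻ t, ∫⁻ s, (G s t + G t s) ∂μ ∂μ < ⊤ := by
  calc ∫⁻ t, ∫⁻ s, (G s t + G t s) ∂μ ∂μ
      = ∫⁻ t, ((∫⁻ s, G s t ∂μ) + ∫⁻ s, G t s ∂μ) ∂μ :=
        lintegral_congr fun t => lintegral_add_left (hG.comp measurable_prodMk_right) _
    _ = (∫⁻ t, ∫⁻ s, G s t ∂μ ∂μ) + ∫⁻ t, ∫⁻ s, G t s ∂μ ∂μ :=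
        lintegral_add_left (hG.comp measurable_swap).lintegral_prod_right' _
    _ < ⊤ := by
        rw [lintegral_lintegral_swap (f := fun t s => G s t) (hG.comp measurable_swap).aemeasurable]
        exact ENNReal.add_lt_top.2 ⟨hfin, hfin⟩

theorem power_function_sobolev_general (T γ : ℝ)
    (hγ1 : -(1 / 2) < γ) (hγ2 : γ ≤ 1 / 2) :
    (∫⁻ t in Set.Ioc (0 : ℝ) T, ENNReal.ofReal (t ^ (2 * γ)) < ⊤) ∧
    ∀ σ ∈ Set.Ioo (0 : ℝ) (γ + 1 / 2),
      ∫⁻ t in Set.Ioc (0 : ℝ) T, ∫⁻ s in Set.Ioc (0 : ℝ) T,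
        ENNReal.ofReal (|t ^ γ - s ^ γ| ^ 2 / |t - s| ^ (1 + 2 * σ)) < ⊤ := by
  refine ⟨setLIntegral_ofReal_rpow_lt_top (by linarith) 0 T, fun σ ⟨hσ₀, hσ₁⟩ => ?_⟩
  set β := γ - σ - 1 / 2 with hβ
  set G : ℝ → ℝ → ENNReal := fun t s => ENNReal.ofReal (t ^ β * |t - s| ^ β) with hG
  have hGm : Measurable (Function.uncurry G) := by
    simp only [hG, Function.uncurry_def]
    fun_prop
  refine lt_of_le_of_lt ?_ (lintegral_lintegral_add_swap_lt_top hGm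
    (lintegral_rpow_mul_abs_sub_rpow_lt_top (by linarith) T))
  refine setLIntegral_mono' measurableSet_Ioc fun t ht =>
    setLIntegral_mono' measurableSet_Ioc fun s hs => ?_
  rw [hG, ← ENNReal.ofReal_add (mul_nonneg (rpow_nonneg hs.1.le _) (by positivity))
    (mul_nonneg (rpow_nonneg ht.1.le _) (by positivity)), abs_sub_comm s t]
  exact ENNReal.ofReal_le_ofReal (sq_abs_rpow_sub_rpow_div_rpow_le (by linarith) (by linarith)
    (by linarith) (by linarith) hs.1 ht.1)

/-- For `γ ∈ (-1/2, 1/2]`, `γ ≠ 0`, the function `g(t) = t^γ` satisfies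
`∫₀^T t^{2γ} dt < ∞` and, for every `σ ∈ (0, γ + 1/2)`,
`∫₀^T ∫₀^T |t^γ - s^γ|² / |t-s|^{1+2σ} ds dt < ∞`; that is, `g ∈ W^{σ,2}(0,T)`. -/
theorem power_function_sobolev (T γ : ℝ) (hT : 0 < T)
    (hγ1 : -(1 / 2) < γ) (hγ2 : γ ≤ 1 / 2) (hγ0 : γ ≠ 0) :
    (∫⁻ t in Set.Ioc (0 : ℝ) T, ENNReal.ofReal (t ^ (2 * γ)) < ⊤) ∧
    ∀ σ ∈ Set.Ioo (0 : ℝ) (γ + 1 / 2),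
      ∫⁻ t in Set.Ioc (0 : ℝ) T, ∫⁻ s in Set.Ioc (0 : ℝ) T,
        ENNReal.ofReal (|t ^ γ - s ^ γ| ^ 2 / |t - s| ^ (1 + 2 * σ)) < ⊤ :=
  power_function_sobolev_general T γ hγ1 hγ2
end
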